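/- arXiv:2511.10592 — 4 statements merged into one kernel-verified Lean document; each statement's English description precedes it below -/
import Mathlib

section
/- For n ≥ 2k and i ∈ [k], a set F ∈ ([n] choose k) satisfies F ≤_LC Z_i if and only if |F ∩ [2i−1]| ≥ i, where Z_i := [i, 2i−1] ∪ [n−k+i+1, n]. Hence ⟨i⟩ = LC(Z_i), the set of all left-compressions of Z_i. -/
/-!
Let `f` be the increasing enumeration of `F`; that of `Z_i` is `i, i+1, …, 2i-1` followed by
the `k - i` largest elements of `[n]`. The last `k - i` comparisons hold for every `k`-subset
of `[n]`, since `f j ≤ n - (k - 1 - j)`. Since `f` increases by at least one per step, the first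
`i` comparisons all follow from `f (i-1) ≤ 2i-1`, which says exactly that at least `i`
elements of `F` lie in `[2i-1]`.
-/

open Finset

/-- `G ≤_LC F`: both are `k`-sets and the increasing enumeration of `G` is
coordinatewise at most that of `F`. -/
def lcLE (k : ℕ) (G F : Finset ℕ) : Prop :=
  ∃ (hG : G.card = k) (hF : F.card = k),
    ∀ i : Fin k, G.orderEmbOfFin hG i ≤ F.orderEmbOfFin hF i

/-- `([n] choose k)`: the `k`-element subsets of `[n] = {1,…,n}`. -/
def ground (n k : ℕ) : Finset (Finset ℕ) := (Finset.Icc 1 n).powersetCard k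

/-- A family is intersecting if any two members meet. -/
def Intersecting' (𝓕 : Set (Finset ℕ)) : Prop := ∀ F ∈ 𝓕, ∀ G ∈ 𝓕, (F ∩ G).Nonempty

/-- A family of `k`-subsets of `[n]` closed under left-compressions. -/
def LeftCompressed (n k : ℕ) (𝓕 : Finset (Finset ℕ)) : Prop :=
  𝓕 ⊆ ground n k ∧ ∀ F ∈ 𝓕, ∀ G ∈ ground n k, lcLE k G F → G ∈ 𝓕

/-- Maximal left-compressed intersecting family. -/
def MLCIF (n k : ℕ) (𝓕 : Finset (Finset ℕ)) : Prop :=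
  LeftCompressed n k 𝓕 ∧ Intersecting' ↑𝓕 ∧
  ∀ 𝓖 : Finset (Finset ℕ), LeftCompressed n k 𝓖 → Intersecting' ↑𝓖 → 𝓕 ⊆ 𝓖 → 𝓕 = 𝓖

/-- The `i`-th canonical family `⟨i⟩`. -/
def canonical (n k i : ℕ) : Finset (Finset ℕ) :=
  (ground n k).filter (fun F => i ≤ (F ∩ Finset.Icc 1 (2*i-1)).card)

/-- `Z_i = [i, 2i-1] ∪ [n-k+i+1, n]`. -/
def Zset (n k i : ℕ) : Finset ℕ :=
  Finset.Icc i (2*i-1) ∪ Finset.Icc (n-k+i+1) n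

/-- `B` is a boundary set (`≤_LC`-maximal element) of `𝓕`. -/
def BoundaryIn (k : ℕ) (𝓕 : Finset (Finset ℕ)) (B : Finset ℕ) : Prop :=
  B ∈ 𝓕 ∧ ∀ F ∈ 𝓕, lcLE k B F → B = F

theorem Fin.apply_add_sub_le_of_strictMono {k : ℕ} {f : Fin k → ℕ} (hf : StrictMono f)
    {a b : Fin k} (hab : a ≤ b) : f a + (b - a : ℕ) ≤ f b := by
  have hcard : #(Icc a b) ≤ #(Icc (f a) (f b)) :=
    card_le_card_of_injOn f
      (fun x hx => by
        obtain ⟨hax, hxb⟩ := mem_Icc.mp hx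
        exact mem_Icc.mpr ⟨hf.monotone hax, hf.monotone hxb⟩)
      hf.injective.injOn
  rw [Fin.card_Icc, Nat.card_Icc] at hcard
  have : (a : ℕ) ≤ b := hab
  omega

theorem Finset.orderEmbOfFin_le_iff_lt_card_filter {α : Type*} [LinearOrder α] {F : Finset α}
    {k : ℕ} (hF : #F = k) (j : Fin k) (m : α) :
    F.orderEmbOfFin hF j ≤ m ↔ (j : ℕ) < #(F.filter (· ≤ m)) := by
  set f := F.orderEmbOfFin hF
  constructor
  · intro hjm
    have hsub : (Iic j).image f ⊆ F.filter (· ≤ m) := by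
      intro x hx
      obtain ⟨j', hj', rfl⟩ := mem_image.mp hx
      exact mem_filter.mpr ⟨F.orderEmbOfFin_mem hF j', (f.monotone (mem_Iic.mp hj')).trans hjm⟩
    have := card_le_card hsub
    rw [card_image_of_injective _ f.injective, Fin.card_Iic] at this
    omega
  · intro hlt
    by_contra! hmj
    have hsub : F.filter (· ≤ m) ⊆ (Iio j).image f := by
      intro x hx
      obtain ⟨hxF, hxm⟩ := mem_filter.mp hx
      obtain ⟨j', rfl⟩ : x ∈ Set.range f := by
        rw [F.range_orderEmbOfFin hF]; exact hxF
      exact mem_image.mpr ⟨j', mem_Iio.mpr (f.lt_iff_lt.mp (hxm.trans_lt hmj)), rfl⟩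
    have := (card_le_card hsub).trans card_image_le
    rw [Fin.card_Iio] at this
    omega

theorem inter_Icc_one_eq_filter_le {F : Finset ℕ} (h0 : 0 ∉ F) (m : ℕ) :
    F ∩ Icc 1 m = F.filter (· ≤ m) := by
  ext x
  simp only [mem_inter, mem_Icc, mem_filter]
  have : x ∈ F → 1 ≤ x := fun hx => Nat.one_le_iff_ne_zero.mpr (fun h => h0 (h ▸ hx))
  tauto

def zsetEnum (n k i : ℕ) (j : Fin k) : ℕ :=
  if (j : ℕ) < i then i + j else n - k + j + 1

theorem zsetEnum_strictMono {n k i : ℕ} (hn : k + i ≤ n + 1) : StrictMono (zsetEnum n k i) := by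
  intro a b hab
  have hab' : (a : ℕ) < b := hab
  have hbk : (b : ℕ) < k := b.isLt
  unfold zsetEnum
  split_ifs <;> omega

theorem zsetEnum_mem {n k i : ℕ} (h1 : 1 ≤ i) (hn : k + i ≤ n + 1) (j : Fin k) :
    zsetEnum n k i j ∈ Zset n k i := by
  have hjk : (j : ℕ) < k := j.isLt
  simp only [zsetEnum, Zset, mem_union, mem_Icc]
  split_ifs <;> omega

theorem card_Zset {n k i : ℕ} (h1 : 1 ≤ i) (hik : i ≤ k) (hn : k + i ≤ n + 1) :
    #(Zset n k i) = k := by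
  have hdisj : Disjoint (Icc i (2*i-1)) (Icc (n-k+i+1) n) :=
    disjoint_left.mpr fun x hx hx' => by
      simp only [mem_Icc] at hx hx'
      omega
  rw [Zset, card_union_of_disjoint hdisj, Nat.card_Icc, Nat.card_Icc]
  omega

theorem orderEmbOfFin_Zset {n k i : ℕ} (h1 : 1 ≤ i) (hik : i ≤ k) (hn : k + i ≤ n + 1) :
    ⇑((Zset n k i).orderEmbOfFin (card_Zset h1 hik hn)) = zsetEnum n k i :=
  (orderEmbOfFin_unique _ (zsetEnum_mem h1 hn) (zsetEnum_strictMono hn)).symm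

theorem lcLE_Zset_iff {n k i : ℕ} (h1 : 1 ≤ i) (hik : i ≤ k) (hn : k + i ≤ n + 1)
    {F : Finset ℕ} (hF : F ∈ ground n k) :
    lcLE k F (Zset n k i) ↔ i ≤ #(F ∩ Icc 1 (2*i-1)) := by
  obtain ⟨hFsub, hFcard⟩ := mem_powersetCard.mp hF
  set f := F.orderEmbOfFin hFcard
  have h0 : 0 ∉ F := fun h => by simpa using hFsub h
  let pivot : Fin k := ⟨i - 1, by omega⟩
  let last : Fin k := ⟨k - 1, by omega⟩
  have hpivot : f pivot ≤ 2*i-1 ↔ i ≤ #(F ∩ Icc 1 (2*i-1)) := by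
    rw [orderEmbOfFin_le_iff_lt_card_filter, inter_Icc_one_eq_filter_le h0]
    simp only [pivot]
    omega
  have hlast : f last ≤ n := (mem_Icc.mp (hFsub (F.orderEmbOfFin_mem hFcard last))).2
  rw [← hpivot]
  constructor
  · rintro ⟨_, _, hle⟩
    have hi1 : i - 1 < i := by omega
    simpa [orderEmbOfFin_Zset h1 hik hn, zsetEnum, pivot, hi1, show i + (i - 1) = 2*i-1 by omega]
      using hle pivot
  · intro hfp
    refine ⟨hFcard, card_Zset h1 hik hn, fun j => ?_⟩
    rw [orderEmbOfFin_Zset h1 hik hn]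
    change f j ≤ zsetEnum n k i j
    have hjk : (j : ℕ) < k := j.isLt
    by_cases hj : (j : ℕ) < i
    · have hgap := Fin.apply_add_sub_le_of_strictMono f.strictMono
        (show j ≤ pivot from Fin.le_def.mpr (by simp only [pivot]; omega))
      simp only [zsetEnum, if_pos hj, pivot] at hgap hfp ⊢
      omega
    · have hgap := Fin.apply_add_sub_le_of_strictMono f.strictMono
        (show j ≤ last from Fin.le_def.mpr (by simp only [last]; omega))
      simp only [zsetEnum, if_neg hj, last] at hgap hlast ⊢
      omega

/-- `F ≤_LC Z_i ↔ |F ∩ [2i-1]| ≥ i`, hence `⟨i⟩ = LC(Z_i)`. -/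
theorem stmt4 (n k i : ℕ) (hn : 2*k ≤ n) (hi : i ∈ Finset.Icc 1 k) :
    (∀ F ∈ ground n k, (lcLE k F (Zset n k i) ↔ i ≤ (F ∩ Finset.Icc 1 (2*i-1)).card)) ∧
    ↑(canonical n k i) = {F : Finset ℕ | F ∈ ground n k ∧ lcLE k F (Zset n k i)} := by
  obtain ⟨h1, hik⟩ := mem_Icc.mp hi
  have hiff (F : Finset ℕ) (hF : F ∈ ground n k) := lcLE_Zset_iff h1 hik (by omega) hF
  refine ⟨hiff, ?_⟩
  ext F
  simp only [canonical, coe_filter, Set.mem_ofPred_eq]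
  exact and_congr_right fun hF => (hiff F hF).symm
end

section
/- Let n ≥ 2k and let F ⊆ ([n] choose k) be a maximal left-compressed intersecting family (MLCIF). If F has exactly one ≤_LC-maximal element, then F = ⟨i⟩ for some i ∈ [k], where ⟨i⟩ := { F ∈ ([n] choose k) : |F ∩ [2i−1]| ≥ i }. -/
/-!
Every member of `𝓕` lies `≤_LC`-below some boundary set, hence below the unique one, `B`.
If the increasing enumeration of `B` satisfied `b_j > 2j+1` for every (0-indexed) `j`, then both
`{1, 3, …, 2k-1}` and `{2, 4, …, 2k}` would lie below `B` (they are subsets of `[n]` as `2k ≤ n`),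
so both would belong to `𝓕` although they are disjoint. Hence `b_j ≤ 2j+1` for some `j`, which says
`B ∈ ⟨j+1⟩`. As `⟨j+1⟩` is left-compressed this gives `𝓕 ⊆ ⟨j+1⟩`, and as `⟨j+1⟩` is also
intersecting, maximality of `𝓕` gives equality.
-/

open Finset

namespace Finset

variable {α : Type*} [LinearOrder α]

theorem sum_orderEmbOfFin {β : Type*} [AddCommMonoid β] (s : Finset α) {k : ℕ} (h : s.card = k)
    (g : α → β) : ∑ i, g (s.orderEmbOfFin h i) = ∑ x ∈ s, g x := by
  conv_rhs => rw [← map_orderEmbOfFin_univ s h, sum_map]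
  rfl

theorem eq_of_orderEmbOfFin_eq {s t : Finset α} {k : ℕ} (hs : s.card = k) (ht : t.card = k)
    (h : ∀ i, s.orderEmbOfFin hs i = t.orderEmbOfFin ht i) : s = t := by
  rw [← image_orderEmbOfFin_univ s hs, ← image_orderEmbOfFin_univ t ht]
  exact image_congr fun i _ => h i

theorem orderEmbOfFin_le_iff_lt_card_filter_s7 {s : Finset α} {k : ℕ} (h : s.card = k) (j : Fin k)
    (m : α) : s.orderEmbOfFin h j ≤ m ↔ (j : ℕ) < #{x ∈ s | x ≤ m} := by
  set e := s.orderEmbOfFin h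
  constructor
  · intro hle
    have hsub : (Iic j).image e ⊆ {x ∈ s | x ≤ m} := by
      intro x hx
      obtain ⟨i, hi, rfl⟩ := mem_image.1 hx
      exact mem_filter.2 ⟨orderEmbOfFin_mem s h i, (e.monotone (mem_Iic.1 hi)).trans hle⟩
    calc (j : ℕ) < #(Iic j) := by rw [Fin.card_Iic]; omega
      _ = #((Iic j).image e) := (card_image_of_injective _ e.injective).symm
      _ ≤ _ := card_le_card hsub
  · intro hcard
    by_contra! hlt
    have hsub : {x ∈ s | x ≤ m} ⊆ (Iio j).image e := by
      intro x hx
      obtain ⟨hxs, hxm⟩ := mem_filter.1 hx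
      obtain ⟨i, rfl⟩ : x ∈ Set.range e := by rwa [range_orderEmbOfFin]
      exact mem_image_of_mem e (mem_Iio.2 (e.lt_iff_lt.1 (hxm.trans_lt hlt)))
    have := card_le_card hsub
    rw [card_image_of_injective _ e.injective, Fin.card_Iio] at this
    omega

end Finset

theorem lcLE_refl {k : ℕ} {F : Finset ℕ} (hF : F.card = k) : lcLE k F F :=
  ⟨hF, hF, fun _ => le_rfl⟩

theorem lcLE_trans {k : ℕ} {F G H : Finset ℕ} (hFG : lcLE k F G) (hGH : lcLE k G H) :
    lcLE k F H := by
  obtain ⟨hF, _, hle₁⟩ := hFG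
  obtain ⟨_, hH, hle₂⟩ := hGH
  exact ⟨hF, hH, fun i => (hle₁ i).trans (hle₂ i)⟩

theorem lcLE.eq_of_sum_le {k : ℕ} {G F : Finset ℕ} (h : lcLE k G F)
    (hsum : ∑ x ∈ F, x ≤ ∑ x ∈ G, x) : G = F := by
  obtain ⟨hG, hF, hle⟩ := h
  refine eq_of_orderEmbOfFin_eq hG hF fun i => ?_
  by_contra hne
  have := sum_lt_sum (fun j _ => hle j) ⟨i, mem_univ i, (hle i).lt_of_ne hne⟩
  have hG' := sum_orderEmbOfFin G hG id
  have hF' := sum_orderEmbOfFin F hF id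
  simp only [id] at hG' hF'
  omega

theorem lcLE.card_filter_le_le {k : ℕ} {G F : Finset ℕ} (h : lcLE k G F) (m : ℕ) :
    #{x ∈ F | x ≤ m} ≤ #{x ∈ G | x ≤ m} := by
  obtain ⟨hG, hF, hle⟩ := h
  by_contra! hlt
  set c := #{x ∈ G | x ≤ m}
  have hck : c < k := hF ▸ hlt.trans_le (card_filter_le F _)
  have hFc := (orderEmbOfFin_le_iff_lt_card_filter_s7 hF ⟨c, hck⟩ m).2 hlt
  exact (lt_irrefl c) ((orderEmbOfFin_le_iff_lt_card_filter_s7 hG ⟨c, hck⟩ m).1 ((hle _).trans hFc))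

theorem lcLE_image_univ_of_strictMono {k : ℕ} {f : Fin k → ℕ} (hf : StrictMono f) {B : Finset ℕ}
    (hB : B.card = k) (hle : ∀ i, f i ≤ B.orderEmbOfFin hB i) : lcLE k (univ.image f) B := by
  have hcard : #(univ.image f) = k := by
    rw [card_image_of_injective _ hf.injective, card_univ, Fintype.card_fin]
  refine ⟨hcard, hB, fun i => ?_⟩
  rw [← orderEmbOfFin_unique hcard (fun x => mem_image_of_mem f (mem_univ x)) hf]
  exact hle i

theorem exists_boundaryIn_lcLE {k : ℕ} {𝓕 : Finset (Finset ℕ)} {F : Finset ℕ} (hF : F ∈ 𝓕)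
    (hFk : F.card = k) : ∃ M, BoundaryIn k 𝓕 M ∧ lcLE k F M := by
  classical
  set S := {M ∈ 𝓕 | lcLE k F M}
  have hFS : F ∈ S := mem_filter.2 ⟨hF, lcLE_refl hFk⟩
  -- a member of `S` with maximal element sum cannot be strictly below another member
  obtain ⟨M, hMS, hMmax⟩ := exists_max_image S (fun M => ∑ x ∈ M, x) ⟨F, hFS⟩
  obtain ⟨hM, hFM⟩ := mem_filter.1 hMS
  refine ⟨M, ⟨hM, fun G hG hMG => hMG.eq_of_sum_le (hMmax G ?_)⟩, hFM⟩
  exact mem_filter.2 ⟨hG, lcLE_trans hFM hMG⟩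

theorem mem_ground {n k : ℕ} {F : Finset ℕ} :
    F ∈ ground n k ↔ F ⊆ Icc 1 n ∧ F.card = k := mem_powersetCard

theorem zero_notMem_of_mem_ground {n k : ℕ} {F : Finset ℕ} (hF : F ∈ ground n k) : 0 ∉ F :=
  fun h0 => by simpa using (mem_ground.1 hF).1 h0

theorem inter_Icc_one_eq_filter {F : Finset ℕ} (h0 : 0 ∉ F) (m : ℕ) :
    F ∩ Icc 1 m = {x ∈ F | x ≤ m} := by
  ext x
  simp only [mem_inter, mem_filter, mem_Icc]
  constructor
  · rintro ⟨hx, -, hm⟩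
    exact ⟨hx, hm⟩
  · rintro ⟨hx, hm⟩
    exact ⟨hx, Nat.one_le_iff_ne_zero.2 (ne_of_mem_of_not_mem hx h0), hm⟩

theorem mem_canonical_succ_iff {n k : ℕ} {F : Finset ℕ} (hF : F ∈ ground n k) (hFk : F.card = k)
    (j : Fin k) : F ∈ canonical n k (j + 1) ↔ F.orderEmbOfFin hFk j ≤ 2 * j + 1 := by
  rw [canonical, mem_filter, show 2 * ((j : ℕ) + 1) - 1 = 2 * j + 1 by omega,
    inter_Icc_one_eq_filter (zero_notMem_of_mem_ground hF), orderEmbOfFin_le_iff_lt_card_filter_s7]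
  simp only [hF, true_and]
  omega

theorem canonical_leftCompressed (n k i : ℕ) : LeftCompressed n k (canonical n k i) := by
  refine ⟨filter_subset _ _, fun F hF G hG hGF => mem_filter.2 ⟨hG, ?_⟩⟩
  obtain ⟨hFg, hFi⟩ := mem_filter.1 hF
  rw [inter_Icc_one_eq_filter (zero_notMem_of_mem_ground hFg)] at hFi
  rw [inter_Icc_one_eq_filter (zero_notMem_of_mem_ground hG)]
  exact hFi.trans (hGF.card_filter_le_le _)

theorem canonical_intersecting (n k : ℕ) {i : ℕ} (hi : 1 ≤ i) :
    Intersecting' ↑(canonical n k i) := by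
  intro F hF G hG
  rw [mem_coe, canonical, mem_filter] at hF hG
  rw [← not_disjoint_iff_nonempty_inter]
  intro hFG
  set I := Icc 1 (2 * i - 1)
  -- two disjoint `i`-subsets do not fit into `[2i-1]`
  have hdisj : Disjoint (F ∩ I) (G ∩ I) := hFG.mono inter_subset_left inter_subset_left
  have := card_le_card
    (union_subset (inter_subset_right : F ∩ I ⊆ I) (inter_subset_right : G ∩ I ⊆ I))
  rw [card_union_of_disjoint hdisj, Nat.card_Icc] at this
  omega

theorem exists_mem_canonical {n k : ℕ} (hn : 2 * k ≤ n) {𝓕 : Finset (Finset ℕ)}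
    (h𝓕 : LeftCompressed n k 𝓕) (hint : Intersecting' ↑𝓕) {B : Finset ℕ} (hB : B ∈ 𝓕) :
    ∃ i ∈ Icc 1 k, B ∈ canonical n k i := by
  have hBg := h𝓕.1 hB
  have hBk := (mem_ground.1 hBg).2
  by_contra! hnone
  have hlarge : ∀ j : Fin k, 2 * (j : ℕ) + 1 < B.orderEmbOfFin hBk j := fun j =>
    not_le.1 fun hj =>
      hnone (j + 1) (mem_Icc.2 ⟨by omega, j.isLt⟩) ((mem_canonical_succ_iff hBg hBk j).2 hj)
  -- the odd (`c = 1`) and the even (`c = 2`) numbers of `[2k]`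
  have hmem : ∀ c ∈ Icc 1 2, univ.image (fun j : Fin k => 2 * (j : ℕ) + c) ∈ 𝓕 := by
    intro c hc
    rw [mem_Icc] at hc
    have hf : StrictMono fun j : Fin k => 2 * (j : ℕ) + c := fun a b (hab : (a : ℕ) < b) => by
      dsimp only
      omega
    have hle := lcLE_image_univ_of_strictMono hf hBk fun j => by have := hlarge j; omega
    refine h𝓕.2 B hB _ (mem_ground.2 ⟨fun x hx => ?_, hle.fst⟩) hle
    obtain ⟨j, -, rfl⟩ := mem_image.1 hx
    have := j.isLt
    rw [mem_Icc]
    omega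
  obtain ⟨x, hx⟩ := hint _ (hmem 1 (by simp)) _ (hmem 2 (by simp))
  simp only [mem_inter, mem_image, mem_univ, true_and] at hx
  obtain ⟨⟨a, rfl⟩, ⟨b, hb⟩⟩ := hx
  omega

/-- An MLCIF with a unique boundary set is canonical. -/
theorem stmt7 (n k : ℕ) (hn : 2*k ≤ n) (𝓕 : Finset (Finset ℕ)) (h : MLCIF n k 𝓕)
    (huniq : ∃! B, BoundaryIn k 𝓕 B) :
    ∃ i ∈ Finset.Icc 1 k, 𝓕 = canonical n k i := by
  obtain ⟨⟨hsub, hcl⟩, hint, hmax⟩ := h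
  obtain ⟨B, hB, hBuniq⟩ := huniq
  obtain ⟨i, hi, hBi⟩ := exists_mem_canonical hn ⟨hsub, hcl⟩ hint hB.1
  refine ⟨i, hi, hmax _ (canonical_leftCompressed n k i)
    (canonical_intersecting n k (mem_Icc.1 hi).1) fun F hF => ?_⟩
  obtain ⟨M, hM, hFM⟩ := exists_boundaryIn_lcLE hF (mem_ground.1 (hsub hF)).2
  rw [hBuniq M hM] at hFM
  exact (canonical_leftCompressed n k i).2 B hBi F (hsub hF) hFM
end

section
/- Let k be even and let G ⊆ ([2k] choose k) consist of exactly one set from each complementary pair {F, F^c} with Σ(F) = Σ(F^c) = (k/2)(2k+1). Then the downward closure G^≤ := ∪_{G ∈ G} LC(G) is an intersecting family. -/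
open Finset

/-!
If `H₁ ≤_LC G₁` and `H₂ ≤_LC G₂` with `Gᵢ ∈ 𝓖` and `H₁ ∩ H₂ = ∅`, then `H₂ = H₁ᶜ`, so
`Σ H₁ + Σ H₂ = k(2k+1) = Σ G₁ + Σ G₂`. Since `≤_LC` can only lower the sum, and strictly unless
the sets coincide, `H₁ = G₁` and `H₂ = G₂`; thus `𝓖` contains both `G₁` and its complement `G₂`.
-/

lemma Finset.sum_eq_sum_orderEmbOfFin {M : Type*} [AddCommMonoid M] (s : Finset ℕ) {k : ℕ}
    (h : s.card = k) (f : ℕ → M) : ∑ x ∈ s, f x = ∑ i : Fin k, f (s.orderEmbOfFin h i) := by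
  conv_lhs => rw [← s.image_orderEmbOfFin_univ h]
  exact sum_image fun _ _ _ _ hab => (s.orderEmbOfFin h).injective hab

lemma Finset.sum_Icc_one_id_mul_two (n : ℕ) : (∑ x ∈ Icc 1 n, x) * 2 = n * (n + 1) := by
  induction n with
  | zero => simp
  | succ n ih => rw [sum_Icc_succ_top (by omega), add_mul, ih]; ring

lemma Finset.eq_sdiff_of_disjoint_of_card_add {α : Type*} [DecidableEq α] {s t u : Finset α}
    (ht : t ⊆ s) (hu : u ⊆ s) (hcard : t.card + u.card = s.card) (hdisj : Disjoint t u) :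
    u = s \ t :=
  eq_of_subset_of_card_le (subset_sdiff.mpr ⟨hu, hdisj.symm⟩)
    (by rw [card_sdiff_of_subset ht]; omega)

namespace lcLE

variable {k : ℕ} {H G : Finset ℕ}

lemma sum_le (h : lcLE k H G) : ∑ x ∈ H, x ≤ ∑ x ∈ G, x := by
  obtain ⟨hH, hG, hle⟩ := h
  rw [H.sum_eq_sum_orderEmbOfFin hH, G.sum_eq_sum_orderEmbOfFin hG]
  exact sum_le_sum fun i _ => hle i

lemma eq_of_sum_le_s11 (h : lcLE k H G) (hs : ∑ x ∈ G, x ≤ ∑ x ∈ H, x) : H = G := by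
  obtain ⟨hH, hG, hle⟩ := h
  rw [H.sum_eq_sum_orderEmbOfFin hH, G.sum_eq_sum_orderEmbOfFin hG] at hs
  have hpt := (sum_eq_sum_iff_of_le fun i _ => hle i).mp
    (le_antisymm (sum_le_sum fun i _ => hle i) hs)
  rw [← H.image_orderEmbOfFin_univ hH, ← G.image_orderEmbOfFin_univ hG]
  exact image_congr hpt

end lcLE

theorem stmt11_general (k : ℕ) (𝓖 : Finset (Finset ℕ))
    (hsub : ∀ G ∈ 𝓖, G ∈ ground (2*k) k ∧ 2 * ∑ x ∈ G, x = k * (2*k+1))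
    (hone : ∀ F ∈ ground (2*k) k, 2 * ∑ x ∈ F, x = k * (2*k+1) →
      Xor' (F ∈ 𝓖) ((Finset.Icc 1 (2*k) \ F) ∈ 𝓖)) :
    Intersecting' {H : Finset ℕ | H ∈ ground (2*k) k ∧ ∃ G ∈ 𝓖, lcLE k H G} := by
  rintro H₁ ⟨hH₁, G₁, hG₁, hlc₁⟩ H₂ ⟨hH₂, G₂, hG₂, hlc₂⟩
  by_contra hmeet
  rw [not_nonempty_iff_eq_empty, ← disjoint_iff_inter_eq_empty] at hmeet
  rw [ground, mem_powersetCard] at hH₁ hH₂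
  have hcompl : H₂ = Icc 1 (2*k) \ H₁ :=
    eq_sdiff_of_disjoint_of_card_add hH₁.1 hH₂.1 (by rw [hH₁.2, hH₂.2, Nat.card_Icc]; omega)
      hmeet
  have htotal : (∑ x ∈ H₁, x + ∑ x ∈ H₂, x) * 2 = 2*k * (2*k + 1) := by
    rw [← sum_union hmeet, hcompl, union_sdiff_of_subset hH₁.1, sum_Icc_one_id_mul_two]
  obtain ⟨hG₁ground, hG₁sum⟩ := hsub G₁ hG₁
  have hG₂sum := (hsub G₂ hG₂).2
  have hle₁ := hlc₁.sum_le
  have hle₂ := hlc₂.sum_le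
  have h₁ : H₁ = G₁ := hlc₁.eq_of_sum_le_s11 (by linarith)
  have h₂ : H₂ = G₂ := hlc₂.eq_of_sum_le_s11 (by linarith)
  rcases hone G₁ hG₁ground hG₁sum with ⟨-, hnot⟩ | ⟨-, hnot⟩
  · exact hnot (by rw [← h₁, ← hcompl, h₂]; exact hG₂)
  · exact hnot hG₁

/-- If `𝓖` picks one set from each complementary pair of middle-sum `k`-sets of `[2k]`
(with `k` even), then the downward closure of `𝓖` is intersecting. -/
theorem stmt11 (k : ℕ) (hk : Even k) (𝓖 : Finset (Finset ℕ))
    (hsub : ∀ G ∈ 𝓖, G ∈ ground (2*k) k ∧ 2 * ∑ x ∈ G, x = k * (2*k+1))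
    (hone : ∀ F ∈ ground (2*k) k, 2 * ∑ x ∈ F, x = k * (2*k+1) →
      Xor' (F ∈ 𝓖) ((Finset.Icc 1 (2*k) \ F) ∈ 𝓖)) :
    Intersecting' {H : Finset ℕ | H ∈ ground (2*k) k ∧ ∃ G ∈ 𝓖, lcLE k H G} :=
  stmt11_general k 𝓖 hsub hone
end

section
/- Let n ≥ 3k^3·C(2k,k) and i ∈ [k], and define ω_i : [n] → ℝ≥0 by ω_i(j) = 0 if j < i and ω_i(j) = 1 otherwise; extend ω_i multiplicatively to sets and additively to families. Then for every j ∈ [k] with j ≠ i, ω_i(⟨j⟩) < ω_i(⟨i⟩), where ⟨ℓ⟩ := { F ∈ ([n] choose k) : |F ∩ [2ℓ−1]| ≥ ℓ }. -/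
open Finset

/-!
Under `ω_i` a set has weight `1` if it avoids `[i-1]` and `0` otherwise, so `ω_i(⟨j⟩)` counts the
members of `⟨j⟩` inside `[i, n]`. For `j < i` there are none: such a set meets `[2j-1]` only in
`[i, 2j-1]`, which has fewer than `j` elements. The family `⟨i⟩` contains every `[i, 2i-1] ∪ G`
with `G` a `(k-i)`-subset of `[2i, n]`, so `ω_i(⟨i⟩) ≥ C(n-2i+1, k-i)`. For `j > i`, a member
of `⟨j⟩` inside `[i, n]` is determined by its trace on `[i, 2j-1]` (at most `4^j` choices) and a
set of at most `k-j` elements of `[2j, n]`, giving at most `4^j C(n-2j+1, k-j)`. This is smaller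
than `C(n-2i+1, k-i)` because consecutive binomial coefficients `C(m, r)`, `C(m, r+1)` differ by
the factor `(m-r)/(r+1)`, which exceeds `4^k` once `n ≥ 3k³ C(2k, k) ≥ k 4^k + 2k`.
-/

namespace Nat

theorem choose_le_choose_right_of_le_half {m a b : ℕ} (hab : a ≤ b) (hb : b ≤ m / 2) :
    m.choose a ≤ m.choose b := by
  induction b, hab using Nat.le_induction with
  | base => rfl
  | succ b _ ih => exact (ih (by omega)).trans (choose_le_succ_of_lt_half_left (by omega))

theorem mul_choose_lt_choose_succ {m r c : ℕ} (h : c * (r + 1) < m - r) :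
    c * m.choose r < m.choose (r + 1) := by
  have hpos : 0 < m.choose r := choose_pos (by omega)
  refine Nat.lt_of_mul_lt_mul_right (a := r + 1) ?_
  rw [choose_succ_right_eq, mul_right_comm, mul_comm (m.choose r)]
  exact Nat.mul_lt_mul_of_pos_right h hpos

theorem four_pow_mul_add_le (k : ℕ) : 4 ^ k * k + 2 * k ≤ 3 * k ^ 3 * (2 * k).choose k := by
  rcases Nat.lt_or_ge k 2 with hk | hk
  · interval_cases k <;> decide
  have hC : 1 ≤ (2 * k).choose k := choose_pos (by omega)
  have h4 : 4 ^ k ≤ (2 * k + 1) * (2 * k).choose k := by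
    simpa [centralBinom_eq_two_mul_choose] using four_pow_le_two_mul_add_one_mul_central_binom k
  have hpoly : 2 * k ^ 2 + 3 * k ≤ 3 * k ^ 3 := by nlinarith
  calc 4 ^ k * k + 2 * k
      ≤ (2 * k + 1) * (2 * k).choose k * k + 2 * k * (2 * k).choose k :=
        Nat.add_le_add (Nat.mul_le_mul_right k h4) (Nat.le_mul_of_pos_right _ hC)
    _ = (2 * k ^ 2 + 3 * k) * (2 * k).choose k := by ring
    _ ≤ 3 * k ^ 3 * (2 * k).choose k := by gcongr

end Nat

theorem sum_prod_ite_lt_eq_card_filter {α R : Type*} [LinearOrder α] [CommSemiring R]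
    (i : α) (𝒜 : Finset (Finset α)) :
    ∑ F ∈ 𝒜, ∏ x ∈ F, (if x < i then (0 : R) else 1) = #{F ∈ 𝒜 | ∀ x ∈ F, i ≤ x} := by
  have hweight (x : α) : (if x < i then (0 : R) else 1) = if i ≤ x then 1 else 0 := by
    rcases lt_or_ge x i with h | h
    · simp [h, not_le.2 h]
    · simp [h, not_lt.2 h]
  simp only [hweight, prod_boole, sum_boole]

namespace Finset

variable {α : Type*} [DecidableEq α]

theorem choose_le_card_filter_superset {A S : Finset α} (hAS : Disjoint A S) {k : ℕ}
    (hA : #A ≤ k) : (#S).choose (k - #A) ≤ #{F ∈ (A ∪ S).powersetCard k | A ⊆ F} := by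
  rw [← card_powersetCard]
  have hinj : Set.InjOn (A ∪ ·) (S.powersetCard (k - #A)) := by
    intro G₁ hG₁ G₂ hG₂ h
    have hG₁ := (mem_powersetCard.1 hG₁).1
    have hG₂ := (mem_powersetCard.1 hG₂).1
    rw [← union_sdiff_cancel_left (hAS.mono_right hG₁),
      ← union_sdiff_cancel_left (hAS.mono_right hG₂)]
    exact congrArg (· \ A) h
  rw [← card_image_of_injOn hinj]
  refine card_le_card fun F hF => ?_
  obtain ⟨G, hG, rfl⟩ := mem_image.1 hF
  obtain ⟨hGS, hGcard⟩ := mem_powersetCard.1 hG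
  rw [mem_filter, mem_powersetCard, card_union_of_disjoint (hAS.mono_right hGS), hGcard]
  exact ⟨⟨union_subset_union_right hGS, by omega⟩, subset_union_left⟩

theorem card_filter_inter_eq_le (S I : Finset α) (k : ℕ) (A : Finset α) :
    #{F ∈ (S ∪ I).powersetCard k | F ∩ I = A} ≤ (#S).choose (k - #A) := by
  rw [← card_powersetCard]
  refine (card_le_card fun F hF => ?_).trans (card_image_le (f := (· ∪ A)))
  obtain ⟨⟨hFSI, hFcard⟩, rfl⟩ := by simpa only [mem_filter, mem_powersetCard] using hF
  refine mem_image.2 ⟨F \ I, mem_powersetCard.2 ⟨?_, ?_⟩, sdiff_union_inter F I⟩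
  · exact sdiff_le_iff'.2 hFSI
  · have := card_sdiff_add_card_inter F I
    omega

theorem card_filter_le_card_inter_le {S I : Finset α} {j k : ℕ}
    (hS : 2 * (k - j) ≤ #S) :
    #{F ∈ (S ∪ I).powersetCard k | j ≤ #(F ∩ I)} ≤ (#S).choose (k - j) * 2 ^ #I := by
  refine (card_le_mul_card_image (f := (· ∩ I)) _ _ fun A hA => ?_).trans
    (Nat.mul_le_mul_left _ ((card_le_card ?_).trans (card_powerset I).le))
  · obtain ⟨F₀, hF₀, rfl⟩ := mem_image.1 hA
    have hj := (mem_filter.1 hF₀).2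
    calc #{F ∈ {F ∈ (S ∪ I).powersetCard k | j ≤ #(F ∩ I)} | F ∩ I = F₀ ∩ I}
        ≤ #{F ∈ (S ∪ I).powersetCard k | F ∩ I = F₀ ∩ I} :=
          card_le_card (filter_subset_filter _ (filter_subset _ _))
      _ ≤ (#S).choose (k - #(F₀ ∩ I)) := card_filter_inter_eq_le S I k _
      _ ≤ (#S).choose (k - j) := Nat.choose_le_choose_right_of_le_half (by omega) (by omega)
  · intro A hA
    obtain ⟨F, -, rfl⟩ := mem_image.1 hA
    exact mem_powerset.2 inter_subset_right

end Finset

section Canonical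

variable {n k i j : ℕ}

theorem filter_canonical_eq_empty_of_lt (hj : 1 ≤ j) (hji : j < i) :
    {F ∈ canonical n k j | ∀ x ∈ F, i ≤ x} = ∅ := by
  refine filter_false_of_mem fun F hF hFi => ?_
  have hsub : F ∩ Icc 1 (2 * j - 1) ⊆ Icc i (2 * j - 1) := fun x hx => by
    rw [mem_inter, mem_Icc] at hx
    exact mem_Icc.2 ⟨hFi x hx.1, hx.2.2⟩
  have := (mem_filter.1 hF).2.trans (card_le_card hsub)
  rw [Nat.card_Icc] at this
  omega

theorem card_filter_canonical_le (hj : 1 ≤ j) (hkn : 2 * k ≤ n + 1) :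
    #{F ∈ canonical n k j | ∀ x ∈ F, i ≤ x} ≤ (n + 1 - 2 * j).choose (k - j) * 4 ^ j := by
  have hS : #(Icc (2 * j) n) = n + 1 - 2 * j := Nat.card_Icc _ _
  have hI : #(Icc i (2 * j - 1)) ≤ 2 * j := by rw [Nat.card_Icc]; omega
  have hsub : {F ∈ canonical n k j | ∀ x ∈ F, i ≤ x} ⊆
      {F ∈ (Icc (2 * j) n ∪ Icc i (2 * j - 1)).powersetCard k | j ≤ #(F ∩ Icc i (2 * j - 1))} := by
    intro F hF
    simp only [canonical, ground, mem_filter, mem_powersetCard] at hF ⊢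
    obtain ⟨⟨⟨hFn, hFk⟩, hFj⟩, hFi⟩ := hF
    refine ⟨⟨fun x hx => ?_, hFk⟩, hFj.trans (card_le_card fun x hx => ?_)⟩
    · have := mem_Icc.1 (hFn hx)
      have := hFi x hx
      rw [mem_union, mem_Icc, mem_Icc]
      omega
    · rw [mem_inter, mem_Icc] at hx ⊢
      exact ⟨hx.1, hFi x hx.1, hx.2.2⟩
  calc _ ≤ _ := card_le_card hsub
    _ ≤ _ := card_filter_le_card_inter_le (j := j) (by rw [hS]; omega)
    _ ≤ (n + 1 - 2 * j).choose (k - j) * 4 ^ j := by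
      rw [hS, show 4 ^ j = 2 ^ (2 * j) by rw [pow_mul]; norm_num]
      gcongr
      norm_num

theorem choose_le_card_filter_canonical (hi : 1 ≤ i) (hik : i ≤ k) (hin : 2 * i ≤ n + 1) :
    (n + 1 - 2 * i).choose (k - i) ≤ #{F ∈ canonical n k i | ∀ x ∈ F, i ≤ x} := by
  have hAS : Disjoint (Icc i (2 * i - 1)) (Icc (2 * i) n) :=
    disjoint_left.2 fun x hx hx' => by rw [mem_Icc] at hx hx'; omega
  have hA : #(Icc i (2 * i - 1)) = i := by rw [Nat.card_Icc]; omega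
  have := choose_le_card_filter_superset hAS (k := k) (by omega)
  rw [hA, Nat.card_Icc] at this
  refine this.trans (card_le_card fun F hF => ?_)
  simp only [canonical, ground, mem_filter, mem_powersetCard] at hF ⊢
  obtain ⟨⟨hFsub, hFk⟩, hAF⟩ := hF
  refine ⟨⟨⟨fun x hx => ?_, hFk⟩, ?_⟩, fun x hx => ?_⟩
  · have := mem_union.1 (hFsub hx)
    rw [mem_Icc, mem_Icc] at this
    exact mem_Icc.2 (by omega)
  · rw [← hA]
    refine card_le_card (subset_inter hAF fun x hx => ?_)
    rw [mem_Icc] at hx ⊢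
    omega
  · have := mem_union.1 (hFsub hx)
    rw [mem_Icc, mem_Icc] at this
    omega

theorem choose_mul_four_pow_lt_choose (hn : 3 * k ^ 3 * (2 * k).choose k ≤ n) (hij : i < j)
    (hjk : j ≤ k) : (n + 1 - 2 * j).choose (k - j) * 4 ^ j < (n + 1 - 2 * i).choose (k - i) := by
  have hbig := (Nat.four_pow_mul_add_le k).trans hn
  obtain ⟨r, hr⟩ : ∃ r, k - i = r + 1 := ⟨k - i - 1, by omega⟩
  have hratio : 4 ^ k * (r + 1) < n + 1 - 2 * i - r := by
    have : 4 ^ k * (r + 1) ≤ 4 ^ k * k := Nat.mul_le_mul_left _ (by omega)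
    omega
  rw [hr]
  calc (n + 1 - 2 * j).choose (k - j) * 4 ^ j
      ≤ (n + 1 - 2 * i).choose r * 4 ^ k := by
        gcongr ?_ * ?_
        · exact (Nat.choose_le_choose _ (by omega)).trans
            (Nat.choose_le_choose_right_of_le_half (by omega) (by omega))
        · exact Nat.pow_le_pow_right (by norm_num) (by omega)
    _ < (n + 1 - 2 * i).choose (r + 1) := by
      rw [mul_comm]; exact Nat.mul_choose_lt_choose_succ hratio

end Canonical

/-- Under the 0/1 weight `ω_i`, the canonical family `⟨i⟩` has strictly
largest weight among canonical families. -/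
theorem stmt18 (n k i j : ℕ) (hn : 3 * k^3 * Nat.choose (2*k) k ≤ n)
    (hi : i ∈ Finset.Icc 1 k) (hj : j ∈ Finset.Icc 1 k) (hne : j ≠ i) :
    ∑ F ∈ canonical n k j, ∏ x ∈ F, (if x < i then (0 : NNReal) else 1)
      < ∑ F ∈ canonical n k i, ∏ x ∈ F, (if x < i then (0 : NNReal) else 1) := by
  rw [mem_Icc] at hi hj
  rw [sum_prod_ite_lt_eq_card_filter, sum_prod_ite_lt_eq_card_filter, Nat.cast_lt]
  have hkn : 2 * k ≤ n := le_add_self.trans ((Nat.four_pow_mul_add_le k).trans hn)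
  have hlow := choose_le_card_filter_canonical (n := n) hi.1 hi.2 (by omega)
  rcases hne.lt_or_gt with hji | hij
  · rw [filter_canonical_eq_empty_of_lt hj.1 hji, card_empty]
    exact (Nat.choose_pos (by omega)).trans_le hlow
  · calc _ ≤ (n + 1 - 2 * j).choose (k - j) * 4 ^ j := card_filter_canonical_le hj.1 (by omega)
      _ < (n + 1 - 2 * i).choose (k - i) := choose_mul_four_pow_lt_choose hn hij hj.2
      _ ≤ _ := hlow
end
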